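/- arXiv:2404.05109 — 3 statements merged into one kernel-verified Lean document; each statement's English description precedes it below -/
import Mathlib

section
/- Let E, H₁, H₂ be complex Hilbert spaces. Suppose U₁ on E ⊕ H₁ given by U₁(e, h₁) = (B₁ h₁, C₁ e + D₁ h₁) is an isometry (where B₁ ∈ B(H₁, E), C₁ ∈ B(E, H₁), D₁ ∈ B(H₁)), and U₂ on E ⊕ H₂ given by U₂(e, h₂) = (A e + B₂ h₂, C₂ e + D₂ h₂) is an isometry (where A ∈ B(E), B₂ ∈ B(H₂, E), C₂ ∈ B(E, H₂), D₂ ∈ B(H₂)). Then the operator U on E ⊕ H₁ ⊕ H₂ defined by U(e, h₁, h₂) = (B₁ h₁, C₁ A e + D₁ h₁ + C₁ B₂ h₂, C₂ e + D₂ h₂) is an isometry. -/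
open ContinuousLinearMap

/-- The element `(x, y)` of the Hilbert-space direct sum `X ⊕ Y`,
modelled as `WithLp 2 (X × Y)`. -/
noncomputable def mk2 {X Y : Type*} (x : X) (y : Y) : WithLp 2 (X × Y) :=
  (WithLp.equiv 2 (X × Y)).symm (x, y)

/-- The element `(e, h₁, h₂)` of the Hilbert-space direct sum `E ⊕ H₁ ⊕ H₂`,
modelled as `WithLp 2 (E × WithLp 2 (H₁ × H₂))`. -/
noncomputable def mk3 {E H₁ H₂ : Type*} (e : E) (h₁ : H₁) (h₂ : H₂) :
    WithLp 2 (E × WithLp 2 (H₁ × H₂)) :=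
  (WithLp.equiv 2 _).symm (e, (WithLp.equiv 2 (H₁ × H₂)).symm (h₁, h₂))

/-! `U` is `U₂` acting on the `E ⊕ H₂` coordinates followed by `U₁` acting on the
`E ⊕ H₁` coordinates: both steps preserve `‖e‖² + ‖h₁‖² + ‖h₂‖²`, the middle vector
being `(A e + B₂ h₂, h₁, C₂ e + D₂ h₂)`. -/

section NormSq

variable {X Y Z : Type*} [SeminormedAddCommGroup X] [SeminormedAddCommGroup Y]
  [SeminormedAddCommGroup Z]

lemma norm_mk2_sq (x : X) (y : Y) : ‖mk2 x y‖ ^ 2 = ‖x‖ ^ 2 + ‖y‖ ^ 2 :=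
  WithLp.prod_norm_sq_eq_of_L2 _

lemma norm_mk3_sq (x : X) (y : Y) (z : Z) :
    ‖mk3 x y z‖ ^ 2 = ‖x‖ ^ 2 + ‖y‖ ^ 2 + ‖z‖ ^ 2 := by
  rw [add_assoc, ← norm_mk2_sq y z]
  exact WithLp.prod_norm_sq_eq_of_L2 _

lemma Isometry.norm_sq_add_norm_sq_eq {F : Type*}
    [FunLike F (WithLp 2 (X × Y)) (WithLp 2 (X × Y))]
    [AddMonoidHomClass F (WithLp 2 (X × Y)) (WithLp 2 (X × Y))] {f : F} (hf : Isometry f)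
    {x x' : X} {y y' : Y} (h : f (mk2 x y) = mk2 x' y') :
    ‖x'‖ ^ 2 + ‖y'‖ ^ 2 = ‖x‖ ^ 2 + ‖y‖ ^ 2 := by
  rw [← norm_mk2_sq, ← norm_mk2_sq, ← h, hf.norm_map_of_map_zero (map_zero f)]

end NormSq

theorem statement2_general
    {E H₁ H₂ : Type*}
    [NormedAddCommGroup E] [InnerProductSpace ℂ E]
    [NormedAddCommGroup H₁] [InnerProductSpace ℂ H₁]
    [NormedAddCommGroup H₂] [InnerProductSpace ℂ H₂]
    (A : E →L[ℂ] E) (B₁ : H₁ →L[ℂ] E) (B₂ : H₂ →L[ℂ] E)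
    (C₁ : E →L[ℂ] H₁) (C₂ : E →L[ℂ] H₂)
    (D₁ : H₁ →L[ℂ] H₁) (D₂ : H₂ →L[ℂ] H₂)
    (U₁ : WithLp 2 (E × H₁) →L[ℂ] WithLp 2 (E × H₁))
    (hU₁ : ∀ (e : E) (h₁ : H₁), U₁ (mk2 e h₁) = mk2 (B₁ h₁) (C₁ e + D₁ h₁))
    (hIso₁ : Isometry U₁)
    (U₂ : WithLp 2 (E × H₂) →L[ℂ] WithLp 2 (E × H₂))
    (hU₂ : ∀ (e : E) (h₂ : H₂), U₂ (mk2 e h₂) = mk2 (A e + B₂ h₂) (C₂ e + D₂ h₂))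
    (hIso₂ : Isometry U₂)
    (U : WithLp 2 (E × WithLp 2 (H₁ × H₂)) →L[ℂ] WithLp 2 (E × WithLp 2 (H₁ × H₂)))
    (hU : ∀ (e : E) (h₁ : H₁) (h₂ : H₂),
      U (mk3 e h₁ h₂) = mk3 (B₁ h₁) (C₁ (A e) + D₁ h₁ + C₁ (B₂ h₂)) (C₂ e + D₂ h₂)) :
    Isometry U := by
  refine AddMonoidHomClass.isometry_of_norm U fun x => ?_
  obtain ⟨e, h₁, h₂, rfl⟩ : ∃ e h₁ h₂, x = mk3 e h₁ h₂ := ⟨_, _, _, rfl⟩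
  have hE₂ := hIso₂.norm_sq_add_norm_sq_eq (hU₂ e h₂)
  have hE₁ := hIso₁.norm_sq_add_norm_sq_eq (hU₁ (A e + B₂ h₂) h₁)
  have hmid : C₁ (A e) + D₁ h₁ + C₁ (B₂ h₂) = C₁ (A e + B₂ h₂) + D₁ h₁ := by
    rw [map_add]; abel
  rw [hU, hmid, ← sq_eq_sq₀ (norm_nonneg _) (norm_nonneg _), norm_mk3_sq, norm_mk3_sq]
  linear_combination hE₁ + hE₂

/-- If `U₁(e, h₁) = (B₁ h₁, C₁ e + D₁ h₁)` and
`U₂(e, h₂) = (A e + B₂ h₂, C₂ e + D₂ h₂)` are isometries, then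
`U(e, h₁, h₂) = (B₁ h₁, C₁ A e + D₁ h₁ + C₁ B₂ h₂, C₂ e + D₂ h₂)` is an isometry
on `E ⊕ H₁ ⊕ H₂`. -/
theorem statement2
    {E H₁ H₂ : Type*}
    [NormedAddCommGroup E] [InnerProductSpace ℂ E] [CompleteSpace E]
    [NormedAddCommGroup H₁] [InnerProductSpace ℂ H₁] [CompleteSpace H₁]
    [NormedAddCommGroup H₂] [InnerProductSpace ℂ H₂] [CompleteSpace H₂]
    (A : E →L[ℂ] E) (B₁ : H₁ →L[ℂ] E) (B₂ : H₂ →L[ℂ] E)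
    (C₁ : E →L[ℂ] H₁) (C₂ : E →L[ℂ] H₂)
    (D₁ : H₁ →L[ℂ] H₁) (D₂ : H₂ →L[ℂ] H₂)
    (U₁ : WithLp 2 (E × H₁) →L[ℂ] WithLp 2 (E × H₁))
    (hU₁ : ∀ (e : E) (h₁ : H₁), U₁ (mk2 e h₁) = mk2 (B₁ h₁) (C₁ e + D₁ h₁))
    (hIso₁ : Isometry U₁)
    (U₂ : WithLp 2 (E × H₂) →L[ℂ] WithLp 2 (E × H₂))
    (hU₂ : ∀ (e : E) (h₂ : H₂), U₂ (mk2 e h₂) = mk2 (A e + B₂ h₂) (C₂ e + D₂ h₂))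
    (hIso₂ : Isometry U₂)
    (U : WithLp 2 (E × WithLp 2 (H₁ × H₂)) →L[ℂ] WithLp 2 (E × WithLp 2 (H₁ × H₂)))
    (hU : ∀ (e : E) (h₁ : H₁) (h₂ : H₂),
      U (mk3 e h₁ h₂) = mk3 (B₁ h₁) (C₁ (A e) + D₁ h₁ + C₁ (B₂ h₂)) (C₂ e + D₂ h₂)) :
    Isometry U :=
  statement2_general A B₁ B₂ C₁ C₂ D₁ D₂ U₁ hU₁ hIso₁ U₂ hU₂ hIso₂ U hU
end

section
/- Let E, H₁, H₂ be complex Hilbert spaces, let A ∈ B(E) be self-adjoint and invertible, and let B₁ ∈ B(H₁, E), C₁ ∈ B(E, H₁), C₂ ∈ B(E, H₂), D₁ ∈ B(H₁), D₂ ∈ B(H₂, H₁), D₃ ∈ B(H₂). Suppose the operator U on E ⊕ H₁ ⊕ H₂ defined by U(e, h₁, h₂) = (B₁ h₁, C₁ e + D₁ h₁ + D₂ h₂, C₂ e + D₃ h₂) is an isometry and that C₁*C₁ = A² and C₁ A⁻² C₁* D₂ = D₂. Set B₂ := A⁻¹ C₁* D₂ ∈ B(H₂, E). Then the operator U₂ on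 E ⊕ H₂ defined by U₂(e, h₂) = (A e + B₂ h₂, C₂ e + D₃ h₂) is an isometry. -/
open ContinuousLinearMap

lemma norm_mk2 {X Y : Type*} [NormedAddCommGroup X] [NormedAddCommGroup Y]
    (x : X) (y : Y) : ‖mk2 x y‖ ^ 2 = ‖x‖ ^ 2 + ‖y‖ ^ 2 := by
  rw [WithLp.prod_norm_sq_eq_of_L2]; rfl

lemma norm_mk3 {E H₁ H₂ : Type*} [NormedAddCommGroup E] [NormedAddCommGroup H₁]
    [NormedAddCommGroup H₂] (e : E) (h₁ : H₁) (h₂ : H₂) :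
    ‖mk3 e h₁ h₂‖ ^ 2 = ‖e‖ ^ 2 + ‖h₁‖ ^ 2 + ‖h₂‖ ^ 2 := by
  rw [WithLp.prod_norm_sq_eq_of_L2]
  have : ‖(mk3 e h₁ h₂).snd‖ ^ 2 = ‖h₁‖ ^ 2 + ‖h₂‖ ^ 2 := by
    rw [WithLp.prod_norm_sq_eq_of_L2]; rfl
  rw [show ‖(mk3 e h₁ h₂).fst‖ = ‖e‖ from rfl, this]; ring

set_option maxHeartbeats 1000000 in
/-- Let `A ∈ B(E)` be self-adjoint and invertible (with inverse `A'`).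
If `U(e, h₁, h₂) = (B₁ h₁, C₁ e + D₁ h₁ + D₂ h₂, C₂ e + D₃ h₂)` is an isometry,
`C₁*C₁ = A²` and `C₁ A⁻² C₁* D₂ = D₂`, then with `B₂ := A⁻¹ C₁* D₂` the operator
`U₂(e, h₂) = (A e + B₂ h₂, C₂ e + D₃ h₂)` is an isometry on `E ⊕ H₂`. -/
theorem statement5
    {E H₁ H₂ : Type*}
    [NormedAddCommGroup E] [InnerProductSpace ℂ E] [CompleteSpace E]
    [NormedAddCommGroup H₁] [InnerProductSpace ℂ H₁] [CompleteSpace H₁]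
    [NormedAddCommGroup H₂] [InnerProductSpace ℂ H₂] [CompleteSpace H₂]
    (A A' : E →L[ℂ] E) (hA : IsSelfAdjoint A)
    (hAA' : A ∘L A' = ContinuousLinearMap.id ℂ E)
    (hA'A : A' ∘L A = ContinuousLinearMap.id ℂ E)
    (B₁ : H₁ →L[ℂ] E) (C₁ : E →L[ℂ] H₁) (C₂ : E →L[ℂ] H₂)
    (D₁ : H₁ →L[ℂ] H₁) (D₂ : H₂ →L[ℂ] H₁) (D₃ : H₂ →L[ℂ] H₂)
    (U : WithLp 2 (E × WithLp 2 (H₁ × H₂)) →L[ℂ] WithLp 2 (E × WithLp 2 (H₁ × H₂)))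
    (hU : ∀ (e : E) (h₁ : H₁) (h₂ : H₂),
      U (mk3 e h₁ h₂) = mk3 (B₁ h₁) (C₁ e + D₁ h₁ + D₂ h₂) (C₂ e + D₃ h₂))
    (hIso : Isometry U)
    (hC₁ : adjoint C₁ ∘L C₁ = A ∘L A)
    (hD₂ : C₁ ∘L (A' ∘L A') ∘L adjoint C₁ ∘L D₂ = D₂)
    (B₂ : H₂ →L[ℂ] E) (hB₂ : B₂ = A' ∘L adjoint C₁ ∘L D₂)
    (U₂ : WithLp 2 (E × H₂) →L[ℂ] WithLp 2 (E × H₂))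
    (hU₂ : ∀ (e : E) (h₂ : H₂), U₂ (mk2 e h₂) = mk2 (A e + B₂ h₂) (C₂ e + D₃ h₂)) :
    Isometry U₂ := by
  -- adjoint of A is A
  have hAadj : adjoint A = A := hA
  -- adjoint of A' is A'
  have hAadj' : adjoint A' = A' := by
    have h1 : A ∘L adjoint A' = ContinuousLinearMap.id ℂ E := by
      have := congrArg adjoint hA'A
      rwa [adjoint_comp, hAadj, adjoint_id] at this
    calc adjoint A' = (A' ∘L A) ∘L adjoint A' := by rw [hA'A, id_comp]
      _ = A' ∘L (A ∘L adjoint A') := by rw [comp_assoc]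
      _ = A' := by rw [h1, comp_id]
  -- key: B₂* B₂ = D₂* D₂ etc, pointwise
  have key : ∀ (e : E) (h₂ : H₂), ‖A e + B₂ h₂‖ = ‖C₁ e + D₂ h₂‖ := by
    intro e h₂
    have f1 : ‖A e‖ ^ 2 = ‖C₁ e‖ ^ 2 := by
      have : (inner ℂ (A e) (A e) : ℂ) = inner ℂ (C₁ e) (C₁ e) := by
        rw [← adjoint_inner_right A, hAadj,
            show A (A e) = (A ∘L A) e from rfl, ← hC₁,
            show (adjoint C₁ ∘L C₁) e = adjoint C₁ (C₁ e) from rfl,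
            adjoint_inner_right C₁]
      have := congrArg Complex.re this
      rwa [← inner_self_eq_norm_sq (𝕜 := ℂ), ← inner_self_eq_norm_sq (𝕜 := ℂ)]
    have f2 : (inner ℂ (A e) (B₂ h₂) : ℂ) = inner ℂ (C₁ e) (D₂ h₂) := by
      rw [hB₂]
      calc (inner ℂ (A e) ((A' ∘L adjoint C₁ ∘L D₂) h₂) : ℂ)
          = inner ℂ (A e) (adjoint A' (adjoint C₁ (D₂ h₂))) := by rw [hAadj']; rfl
        _ = inner ℂ (A' (A e)) (adjoint C₁ (D₂ h₂)) := adjoint_inner_right A' _ _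
        _ = inner ℂ e (adjoint C₁ (D₂ h₂)) := by
            rw [show A' (A e) = (A' ∘L A) e from rfl, hA'A]; rfl
        _ = inner ℂ (C₁ e) (D₂ h₂) := adjoint_inner_right C₁ _ _
    have f3 : ‖B₂ h₂‖ ^ 2 = ‖D₂ h₂‖ ^ 2 := by
      have : (inner ℂ (B₂ h₂) (B₂ h₂) : ℂ) = inner ℂ (D₂ h₂) (D₂ h₂) := by
        conv_lhs => rw [show (B₂ h₂ : E) = A' (adjoint C₁ (D₂ h₂)) by rw [hB₂]; rfl]
        rw [show (A' (adjoint C₁ (D₂ h₂)) : E) = adjoint A' (adjoint C₁ (D₂ h₂)) by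
              rw [hAadj']]
        rw [adjoint_inner_left A', adjoint_inner_left C₁, hAadj']
        rw [show (C₁ (A' (A' (adjoint C₁ (D₂ h₂)))) : H₁)
              = (C₁ ∘L (A' ∘L A') ∘L adjoint C₁ ∘L D₂) h₂ from rfl, hD₂]
      have := congrArg Complex.re this
      rwa [← inner_self_eq_norm_sq (𝕜 := ℂ), ← inner_self_eq_norm_sq (𝕜 := ℂ)]
    have hsq : ‖A e + B₂ h₂‖ ^ 2 = ‖C₁ e + D₂ h₂‖ ^ 2 := by
      rw [norm_add_sq (𝕜 := ℂ), norm_add_sq (𝕜 := ℂ), f1, f2, f3]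
    nlinarith [norm_nonneg (A e + B₂ h₂), norm_nonneg (C₁ e + D₂ h₂)]
  apply AddMonoidHomClass.isometry_of_norm U₂
  intro x
  obtain ⟨⟨e, h₂⟩⟩ := x
  have hx : (WithLp.toLp 2 (e, h₂) : WithLp 2 (E × H₂)) = mk2 e h₂ := rfl
  rw [hx, hU₂]
  -- use the big isometry at (e, 0, h₂)
  have hUiso : ‖U (mk3 e (0 : H₁) h₂)‖ = ‖mk3 e (0 : H₁) h₂‖ :=
    hIso.norm_map_of_map_zero (map_zero U) _
  rw [hU e (0 : H₁) h₂] at hUiso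
  simp only [map_zero, add_zero, zero_add] at hUiso
  have h1 := norm_mk3 (B₁ (0 : H₁)) (C₁ e + D₂ h₂) (C₂ e + D₃ h₂)
  have h2 := norm_mk3 e (0 : H₁) h₂
  rw [map_zero, norm_zero] at h1
  rw [norm_zero] at h2
  have hsq : ‖mk2 (A e + B₂ h₂) (C₂ e + D₃ h₂)‖ ^ 2 = ‖mk2 e h₂‖ ^ 2 := by
    have hUiso2 : ‖mk3 (0 : E) (C₁ e + D₂ h₂) (C₂ e + D₃ h₂)‖ ^ 2
        = ‖mk3 e (0 : H₁) h₂‖ ^ 2 := by rw [hUiso]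
    rw [norm_mk2, norm_mk2, key]
    nlinarith [hUiso2, h1, h2]
  nlinarith [norm_nonneg (mk2 (A e + B₂ h₂) (C₂ e + D₃ h₂)), norm_nonneg (mk2 e h₂)]
end

section
/- Let E, H₁, H₂ be complex Hilbert spaces and let A ∈ B(E), B₁ ∈ B(H₁, E), B₂ ∈ B(H₂, E), C₁ ∈ B(E, H₁), C₂ ∈ B(E, H₂), D₁ ∈ B(H₁), D₂ ∈ B(H₂, H₁), D₃ ∈ B(H₂), A₁, A₂ ∈ B(E), X₁ ∈ B(E, H₁), Y₂ ∈ B(H₂, E). Suppose the operator U on E ⊕ H₁ ⊕ H₂ defined by U(e, h₁, h₂) = (A e + B₁ h₁ + B₂ h₂, C₁ e + D₁ h₁ + D₂ h₂, C₂ e + D₃ h₂) is an isometry, and that A = A₁ A₂, B₂ = A₁ Y₂, C₁ = X₁ A₂, D₂ = X₁ Y₂, A₁*A₁ + X₁*X₁ = I_E, and A₂* is injective on the range of A₁*B₁ + X₁*D₁. Then the operator U₁ on E ⊕ H₁ defined by U₁(e, h₁) = (A₁ e + B₁ h₁, X₁ e + D₁ h₁) is an isometry. -/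
open ContinuousLinearMap

/-!
The first two columns of the isometry `U` are orthonormal. Since `A = A₁ A₂` and `C₁ = X₁ A₂`,
orthogonality of these columns reads `A₂* S = 0` for `S = A₁*B₁ + X₁*D₁`, so injectivity of `A₂*`
on the range of `S` forces `S = 0`. Together with `A₁*A₁ + X₁*X₁ = I` and the normalisation
`B₁*B₁ + D₁*D₁ = I` of the second column of `U`, this says that the columns of `U₁` are
orthonormal, i.e. `U₁*U₁ = I`.
-/

open scoped InnerProductSpace

section

variable {𝕜 : Type*} [RCLike 𝕜]

theorem isometry_iff_inner_map_map {V W : Type*} [NormedAddCommGroup V] [InnerProductSpace 𝕜 V]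
    [NormedAddCommGroup W] [InnerProductSpace 𝕜 W] (f : V →L[𝕜] W) :
    Isometry f ↔ ∀ x y, ⟪f x, f y⟫_𝕜 = ⟪x, y⟫_𝕜 := by
  rw [AddMonoidHomClass.isometry_iff_norm, LinearMap.norm_map_iff_inner_map_map]

theorem inner_mk2 {X Y : Type*} [NormedAddCommGroup X] [InnerProductSpace 𝕜 X]
    [NormedAddCommGroup Y] [InnerProductSpace 𝕜 Y] (x x' : X) (y y' : Y) :
    ⟪mk2 x y, mk2 x' y'⟫_𝕜 = ⟪x, x'⟫_𝕜 + ⟪y, y'⟫_𝕜 :=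
  WithLp.prod_inner_apply _ _

theorem mk3_eq_mk2 {E H₁ H₂ : Type*} (e : E) (h₁ : H₁) (h₂ : H₂) :
    mk3 e h₁ h₂ = mk2 e (mk2 h₁ h₂) :=
  rfl

theorem inner_mk3 {E H₁ H₂ : Type*} [NormedAddCommGroup E] [InnerProductSpace 𝕜 E]
    [NormedAddCommGroup H₁] [InnerProductSpace 𝕜 H₁]
    [NormedAddCommGroup H₂] [InnerProductSpace 𝕜 H₂]
    (e e' : E) (h₁ h₁' : H₁) (h₂ h₂' : H₂) :
    ⟪mk3 e h₁ h₂, mk3 e' h₁' h₂'⟫_𝕜 = ⟪e, e'⟫_𝕜 + ⟪h₁, h₁'⟫_𝕜 + ⟪h₂, h₂'⟫_𝕜 := by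
  rw [mk3_eq_mk2, mk3_eq_mk2, inner_mk2, inner_mk2, add_assoc]

variable {X Y Z W : Type*}
  [NormedAddCommGroup X] [InnerProductSpace 𝕜 X] [CompleteSpace X]
  [NormedAddCommGroup Y] [InnerProductSpace 𝕜 Y]
  [NormedAddCommGroup Z] [InnerProductSpace 𝕜 Z] [CompleteSpace Z]
  [NormedAddCommGroup W] [InnerProductSpace 𝕜 W] [CompleteSpace W]

theorem inner_add_inner_eq_inner_adjoint_comp_add (P : X →L[𝕜] Z) (Q : Y →L[𝕜] Z)
    (R : X →L[𝕜] W) (S : Y →L[𝕜] W) (x : X) (y : Y) :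
    ⟪P x, Q y⟫_𝕜 + ⟪R x, S y⟫_𝕜 = ⟪x, (adjoint P ∘L Q + adjoint R ∘L S) y⟫_𝕜 := by
  rw [add_apply, inner_add_right, comp_apply, comp_apply, adjoint_inner_right,
    adjoint_inner_right]

theorem isometry_of_columns_orthonormal [CompleteSpace Y] (P : X →L[𝕜] Z) (Q : Y →L[𝕜] Z)
    (R : X →L[𝕜] W) (S : Y →L[𝕜] W) (V : WithLp 2 (X × Y) →L[𝕜] WithLp 2 (Z × W))
    (hV : ∀ x y, V (mk2 x y) = mk2 (P x + Q y) (R x + S y))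
    (hPR : adjoint P ∘L P + adjoint R ∘L R = ContinuousLinearMap.id 𝕜 X)
    (hPQRS : adjoint P ∘L Q + adjoint R ∘L S = 0)
    (hQS : adjoint Q ∘L Q + adjoint S ∘L S = ContinuousLinearMap.id 𝕜 Y) :
    Isometry V := by
  refine (isometry_iff_inner_map_map V).2 fun v w => ?_
  have hP := inner_add_inner_eq_inner_adjoint_comp_add P P R R
  have hQ := inner_add_inner_eq_inner_adjoint_comp_add Q Q S S
  have hPQ := inner_add_inner_eq_inner_adjoint_comp_add P Q R S v.fst w.snd
  have hQP : ⟪Q v.snd, P w.fst⟫_𝕜 + ⟪S v.snd, R w.fst⟫_𝕜 = 0 := by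
    rw [← adjoint_inner_left, ← adjoint_inner_left, ← inner_add_left, ← comp_apply,
      ← comp_apply, ← add_apply, hPQRS, zero_apply, inner_zero_left]
  rw [hPR] at hP
  rw [hQS] at hQ
  rw [hPQRS] at hPQ
  change ⟪V (mk2 v.fst v.snd), V (mk2 w.fst w.snd)⟫_𝕜 = ⟪mk2 v.fst v.snd, mk2 w.fst w.snd⟫_𝕜
  simp only [hV, inner_mk2, inner_add_left, inner_add_right, zero_apply, inner_zero_right,
    id_apply] at hP hQ hPQ ⊢
  linear_combination hP v.fst w.fst + hQ v.snd w.snd + hPQ + hQP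

variable {E H₁ H₂ : Type*}
  [NormedAddCommGroup E] [InnerProductSpace 𝕜 E] [CompleteSpace E]
  [NormedAddCommGroup H₁] [InnerProductSpace 𝕜 H₁] [CompleteSpace H₁]
  [NormedAddCommGroup H₂] [InnerProductSpace 𝕜 H₂]
  {U : WithLp 2 (E × WithLp 2 (H₁ × H₂)) →L[𝕜] WithLp 2 (E × WithLp 2 (H₁ × H₂))}
  {A : E →L[𝕜] E} {C₁ : E →L[𝕜] H₁} {C₂ : E →L[𝕜] H₂} {B₁ : H₁ →L[𝕜] E} {D₁ : H₁ →L[𝕜] H₁}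

theorem adjoint_comp_add_adjoint_comp_eq_zero_of_isometry
    (hU₁ : ∀ e, U (mk3 e 0 0) = mk3 (A e) (C₁ e) (C₂ e))
    (hU₂ : ∀ h, U (mk3 0 h 0) = mk3 (B₁ h) (D₁ h) 0) (hIso : Isometry U) :
    adjoint A ∘L B₁ + adjoint C₁ ∘L D₁ = 0 := by
  ext h
  refine ext_inner_left 𝕜 fun e => ?_
  have := (isometry_iff_inner_map_map U).1 hIso (mk3 e 0 0) (mk3 0 h 0)
  rw [hU₁, hU₂, inner_mk3, inner_mk3] at this
  simpa [inner_add_inner_eq_inner_adjoint_comp_add] using this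

theorem adjoint_comp_add_adjoint_comp_eq_id_of_isometry
    (hU₂ : ∀ h, U (mk3 0 h 0) = mk3 (B₁ h) (D₁ h) 0) (hIso : Isometry U) :
    adjoint B₁ ∘L B₁ + adjoint D₁ ∘L D₁ = ContinuousLinearMap.id 𝕜 H₁ := by
  ext h
  refine ext_inner_left 𝕜 fun h' => ?_
  have := (isometry_iff_inner_map_map U).1 hIso (mk3 0 h' 0) (mk3 0 h 0)
  rw [hU₂, hU₂, inner_mk3, inner_mk3] at this
  simpa [inner_add_inner_eq_inner_adjoint_comp_add] using this

end

theorem statement10_general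
    {E H₁ H₂ : Type*}
    [NormedAddCommGroup E] [InnerProductSpace ℂ E] [CompleteSpace E]
    [NormedAddCommGroup H₁] [InnerProductSpace ℂ H₁] [CompleteSpace H₁]
    [NormedAddCommGroup H₂] [InnerProductSpace ℂ H₂]
    (A : E →L[ℂ] E) (B₁ : H₁ →L[ℂ] E) (B₂ : H₂ →L[ℂ] E)
    (C₁ : E →L[ℂ] H₁) (C₂ : E →L[ℂ] H₂)
    (D₁ : H₁ →L[ℂ] H₁) (D₂ : H₂ →L[ℂ] H₁) (D₃ : H₂ →L[ℂ] H₂)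
    (A₁ A₂ : E →L[ℂ] E) (X₁ : E →L[ℂ] H₁)
    (U : WithLp 2 (E × WithLp 2 (H₁ × H₂)) →L[ℂ] WithLp 2 (E × WithLp 2 (H₁ × H₂)))
    (hU : ∀ (e : E) (h₁ : H₁) (h₂ : H₂),
      U (mk3 e h₁ h₂) =
        mk3 (A e + B₁ h₁ + B₂ h₂) (C₁ e + D₁ h₁ + D₂ h₂) (C₂ e + D₃ h₂))
    (hIso : Isometry U)
    (hA : A = A₁ ∘L A₂)
    (hC₁ : C₁ = X₁ ∘L A₂)
    (hA₁X₁ : adjoint A₁ ∘L A₁ + adjoint X₁ ∘L X₁ = ContinuousLinearMap.id ℂ E)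
    (hInj : ∀ h : H₁, adjoint A₂ ((adjoint A₁ ∘L B₁ + adjoint X₁ ∘L D₁) h) = 0 →
      (adjoint A₁ ∘L B₁ + adjoint X₁ ∘L D₁) h = 0)
    (U₁ : WithLp 2 (E × H₁) →L[ℂ] WithLp 2 (E × H₁))
    (hU₁ : ∀ (e : E) (h₁ : H₁), U₁ (mk2 e h₁) = mk2 (A₁ e + B₁ h₁) (X₁ e + D₁ h₁)) :
    Isometry U₁ := by
  have hU₁₀ : ∀ e, U (mk3 e 0 0) = mk3 (A e) (C₁ e) (C₂ e) := fun e => by simpa using hU e 0 0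
  have hU₀₁ : ∀ h, U (mk3 0 h 0) = mk3 (B₁ h) (D₁ h) 0 := fun h => by simpa using hU 0 h 0
  have hS : adjoint A₁ ∘L B₁ + adjoint X₁ ∘L D₁ = 0 := by
    ext h
    apply hInj
    rw [← comp_apply, comp_add, ← comp_assoc, ← comp_assoc, ← adjoint_comp, ← adjoint_comp,
      ← hA, ← hC₁, adjoint_comp_add_adjoint_comp_eq_zero_of_isometry hU₁₀ hU₀₁ hIso]
    rfl
  exact isometry_of_columns_orthonormal A₁ B₁ X₁ D₁ U₁ hU₁ hA₁X₁ hS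
    (adjoint_comp_add_adjoint_comp_eq_id_of_isometry hU₀₁ hIso)

/-- Suppose
`U(e, h₁, h₂) = (A e + B₁ h₁ + B₂ h₂, C₁ e + D₁ h₁ + D₂ h₂, C₂ e + D₃ h₂)` is an
isometry, `A = A₁ A₂`, `B₂ = A₁ Y₂`, `C₁ = X₁ A₂`, `D₂ = X₁ Y₂`,
`A₁*A₁ + X₁*X₁ = I` and `A₂*` is injective on the range of `A₁*B₁ + X₁*D₁`.
Then `U₁(e, h₁) = (A₁ e + B₁ h₁, X₁ e + D₁ h₁)` is an isometry on `E ⊕ H₁`. -/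
theorem statement10
    {E H₁ H₂ : Type*}
    [NormedAddCommGroup E] [InnerProductSpace ℂ E] [CompleteSpace E]
    [NormedAddCommGroup H₁] [InnerProductSpace ℂ H₁] [CompleteSpace H₁]
    [NormedAddCommGroup H₂] [InnerProductSpace ℂ H₂] [CompleteSpace H₂]
    (A : E →L[ℂ] E) (B₁ : H₁ →L[ℂ] E) (B₂ : H₂ →L[ℂ] E)
    (C₁ : E →L[ℂ] H₁) (C₂ : E →L[ℂ] H₂)
    (D₁ : H₁ →L[ℂ] H₁) (D₂ : H₂ →L[ℂ] H₁) (D₃ : H₂ →L[ℂ] H₂)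
    (A₁ A₂ : E →L[ℂ] E) (X₁ : E →L[ℂ] H₁) (Y₂ : H₂ →L[ℂ] E)
    (U : WithLp 2 (E × WithLp 2 (H₁ × H₂)) →L[ℂ] WithLp 2 (E × WithLp 2 (H₁ × H₂)))
    (hU : ∀ (e : E) (h₁ : H₁) (h₂ : H₂),
      U (mk3 e h₁ h₂) =
        mk3 (A e + B₁ h₁ + B₂ h₂) (C₁ e + D₁ h₁ + D₂ h₂) (C₂ e + D₃ h₂))
    (hIso : Isometry U)
    (hA : A = A₁ ∘L A₂) (hB₂ : B₂ = A₁ ∘L Y₂)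
    (hC₁ : C₁ = X₁ ∘L A₂) (hD₂ : D₂ = X₁ ∘L Y₂)
    (hA₁X₁ : adjoint A₁ ∘L A₁ + adjoint X₁ ∘L X₁ = ContinuousLinearMap.id ℂ E)
    (hInj : ∀ h : H₁, adjoint A₂ ((adjoint A₁ ∘L B₁ + adjoint X₁ ∘L D₁) h) = 0 →
      (adjoint A₁ ∘L B₁ + adjoint X₁ ∘L D₁) h = 0)
    (U₁ : WithLp 2 (E × H₁) →L[ℂ] WithLp 2 (E × H₁))
    (hU₁ : ∀ (e : E) (h₁ : H₁), U₁ (mk2 e h₁) = mk2 (A₁ e + B₁ h₁) (X₁ e + D₁ h₁)) :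
    Isometry U₁ :=
  statement10_general A B₁ B₂ C₁ C₂ D₁ D₂ D₃ A₁ A₂ X₁ U hU hIso hA hC₁ hA₁X₁ hInj U₁ hU₁
end
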